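/- Let α = θ₁ ∈ T_n be the constant map with value 1 (an idempotent of rank 1). Then the idempotents of (T_n, *_α) are exactly the constant maps θ_i, i = 1,…,n, and the isolated subsemigroups of (T_n, *_α) are exactly the sets ∪_{i∈X} √θ_i for nonempty X ⊆ {1,…,n}, where √θ_i = {x : x^{*m} = θ_i for some m ≥ 1}; moreover, every such set is completely isolated. -/
import Mathlib


/-- The sandwich multiplication `β *_α γ = βαγ` (left-to-right composition). -/
def vmul {n : ℕ} (α β γ : Fin n → Fin n) : Fin n → Fin n :=
  fun x => γ (α (β x))

/-- `vpow α β m = β^{*(m+1)}`, the positive `*_α`-powers of `β`. -/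
def vpow {n : ℕ} (α β : Fin n → Fin n) : ℕ → (Fin n → Fin n)
  | 0 => β
  | m + 1 => vmul α (vpow α β m) β

/-- For the sandwich element `α = θ₁` (the constant map with value `1`):
the idempotents of `(T_n, *_α)` are exactly the constant maps `θ i`; the
isolated subsemigroups are exactly the unions `⋃_{i ∈ X} √θ_i` over nonempty
`X ⊆ N`; and each such union is completely isolated. -/
theorem variant_of_constant_sandwich {n : ℕ} (hn : 0 < n)
    (α : Fin n → Fin n) (hα : α = fun _ => (⟨0, hn⟩ : Fin n)) :
    (∀ ε : Fin n → Fin n, vmul α ε ε = ε ↔ ∃ i : Fin n, ε = fun _ => i) ∧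
    (∀ T : Set (Fin n → Fin n),
      (T.Nonempty ∧ (∀ x ∈ T, ∀ y ∈ T, vmul α x y ∈ T) ∧
          (∀ (x : Fin n → Fin n) (m : ℕ), vpow α x m ∈ T → x ∈ T)) ↔
        (∃ X : Set (Fin n), X.Nonempty ∧
          T = ⋃ i ∈ X, {x : Fin n → Fin n | ∃ m : ℕ, vpow α x m = fun _ => i})) ∧
    (∀ X : Set (Fin n), X.Nonempty →
      ∀ x y : Fin n → Fin n,
        vmul α x y ∈ (⋃ i ∈ X, {x : Fin n → Fin n | ∃ m : ℕ, vpow α x m = fun _ => i}) →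
          x ∈ (⋃ i ∈ X, {x : Fin n → Fin n | ∃ m : ℕ, vpow α x m = fun _ => i}) ∨
          y ∈ (⋃ i ∈ X, {x : Fin n → Fin n | ∃ m : ℕ, vpow α x m = fun _ => i})) := by
  subst hα
  set z0 : Fin n := ⟨0, hn⟩ with hz0
  -- all positive powers are the constant map with value `x z0`
  have hpow : ∀ (x : Fin n → Fin n) (m : ℕ),
      vpow (fun _ => z0) x (m + 1) = fun _ => x z0 := by
    intro x m; rfl
  -- √θ_i = {x | x z0 = i}
  have hroot : ∀ (i : Fin n) (x : Fin n → Fin n),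
      (∃ m, vpow (fun _ => z0) x m = fun _ => i) ↔ x z0 = i := by
    intro i x
    constructor
    · rintro ⟨m, hm⟩
      cases m with
      | zero => exact congrFun hm z0
      | succ m => rw [hpow] at hm; exact congrFun hm z0
    · intro h; exact ⟨1, by rw [hpow, h]⟩
  -- the unions are just preimages
  have hU : ∀ X : Set (Fin n),
      (⋃ i ∈ X, {x : Fin n → Fin n | ∃ m : ℕ, vpow (fun _ => z0) x m = fun _ => i})
        = {x : Fin n → Fin n | x z0 ∈ X} := by
    intro X; ext x
    simp only [Set.mem_iUnion, Set.mem_setOf_eq, exists_prop]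
    constructor
    · rintro ⟨i, hi, hm⟩
      have := (hroot i x).mp hm
      rw [this]; exact hi
    · intro h; exact ⟨x z0, h, (hroot _ x).mpr rfl⟩
  refine ⟨?_, ?_, ?_⟩
  · -- idempotents
    intro ε
    constructor
    · intro h
      exact ⟨ε z0, h.symm⟩
    · rintro ⟨i, rfl⟩; rfl
  · -- isolated subsemigroups
    intro T
    constructor
    · rintro ⟨⟨t0, ht0⟩, hclosed, hiso⟩
      refine ⟨(fun x => x z0) '' T, ⟨t0 z0, t0, ht0, rfl⟩, ?_⟩
      rw [hU]
      ext x
      simp only [Set.mem_setOf_eq, Set.mem_image]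
      constructor
      · intro hx; exact ⟨x, hx, rfl⟩
      · rintro ⟨y, hy, hyx⟩
        have h1 : (fun _ : Fin n => y z0) ∈ T := hclosed y hy y hy
        have h2 : vpow (fun _ => z0) x 1 ∈ T := by
          rw [hpow, ← hyx]; exact h1
        exact hiso x 1 h2
    · rintro ⟨X, hX, rfl⟩
      rw [hU]
      obtain ⟨i, hi⟩ := hX
      refine ⟨⟨fun _ => i, hi⟩, ?_, ?_⟩
      · intro x hx y hy
        exact hy
      · intro x m h
        cases m with
        | zero => exact h
        | succ m => rw [hpow] at h; exact h
  · -- completely isolated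
    intro X hX x y h
    rw [hU] at h ⊢
    exact Or.inr h
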